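/- For V_13 with a = 1/2 and an initial point x⁽⁰⁾ ∈ S² with x₁⁽⁰⁾ > 1/2, the trajectory V_13ⁿ(x⁽⁰⁾) converges to (x₁⁽⁰⁾, 0, 1−x₁⁽⁰⁾). -/
import Mathlib


def V13 (a : ℝ) (p : ℝ × ℝ × ℝ) : ℝ × ℝ × ℝ :=
  (p.1^2 + 2*a*p.1*(1-p.1), p.2.1^2 + 2*p.2.1*p.2.2, p.2.2^2 + 2*(1-a)*p.1*(1-p.1))

def S2 : Set (ℝ × ℝ × ℝ) :=
  {p | 0 ≤ p.1 ∧ 0 ≤ p.2.1 ∧ 0 ≤ p.2.2 ∧ p.1 + p.2.1 + p.2.2 = 1}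

theorem V13_half_converges (x : ℝ × ℝ × ℝ) (hx : x ∈ S2) (h1 : x.1 > 1/2) :
    Filter.Tendsto (fun n => (V13 (1/2))^[n] x) Filter.atTop
      (nhds (x.1, (0:ℝ), 1 - x.1)) := by
  obtain ⟨hx1, hx2, hx3, hsum⟩ := hx
  set q : ℝ := 2*(1 - x.1) with hq
  have hq0 : 0 ≤ q := by simp only [hq]; nlinarith
  have hq1 : q < 1 := by simp only [hq]; nlinarith
  have key : ∀ n, ((V13 (1/2))^[n] x).1 = x.1 ∧ 0 ≤ ((V13 (1/2))^[n] x).2.1 ∧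
      0 ≤ ((V13 (1/2))^[n] x).2.2 ∧
      ((V13 (1/2))^[n] x).1 + ((V13 (1/2))^[n] x).2.1 + ((V13 (1/2))^[n] x).2.2 = 1 ∧
      ((V13 (1/2))^[n] x).2.1 ≤ q^n * x.2.1 := by
    intro n
    induction n with
    | zero => simpa using ⟨hx2, hx3, hsum⟩
    | succ n ih =>
      obtain ⟨h1', h2, h3, h4, h5⟩ := ih
      rw [Function.iterate_succ_apply']
      set p := (V13 (1/2))^[n] x with hp
      have hqq : q = 2*(p.2.1 + p.2.2) := by simp only [hq]; linarith
      simp only [V13]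
      refine ⟨by nlinarith, by nlinarith, by nlinarith, ?_, ?_⟩
      · linear_combination (p.2.1 + p.2.2 + 1 - p.1) * h4
      · rw [pow_succ q n]
        nlinarith [mul_nonneg (sub_nonneg.mpr h5) hq0, sq_nonneg p.2.1]
  have h2tend : Filter.Tendsto (fun n => ((V13 (1/2))^[n] x).2.1) Filter.atTop (nhds 0) := by
    apply squeeze_zero (fun n => (key n).2.1) (fun n => (key n).2.2.2.2)
    have := (tendsto_pow_atTop_nhds_zero_of_lt_one hq0 hq1).mul_const x.2.1
    simpa using this
  have h1tend : Filter.Tendsto (fun n => ((V13 (1/2))^[n] x).1) Filter.atTop (nhds x.1) :=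
    tendsto_const_nhds.congr (fun n => ((key n).1).symm)
  have h3tend : Filter.Tendsto (fun n => ((V13 (1/2))^[n] x).2.2) Filter.atTop (nhds (1 - x.1)) := by
    have h := (tendsto_const_nhds (x := (1 : ℝ) - x.1)).sub h2tend
    rw [sub_zero] at h
    exact h.congr (fun n => by
      have ha := (key n).1
      have hb := (key n).2.2.2.1
      linarith)
  have := h1tend.prodMk_nhds (h2tend.prodMk_nhds h3tend)
  exact this
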